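/- If u : [0,∞) → ℝ is C¹ and (1+x)^n u^{(i)}(x) ∈ L¹([0,∞)) for i = 0,1 and some integer n ≥ 1, then |u(x)| ≤ C/(1+x)^n for all x ≥ 0, for some constant C. -/

import Mathlib

open MeasureTheory Set

/-! The function `v x = (1 + x) ^ n * u x` has derivative
`n (1 + x) ^ (n - 1) u + (1 + x) ^ n u'`, which is integrable on `[0, ∞)` by the two weighted
hypotheses. By the fundamental theorem of calculus `|v x| ≤ |v 0| + ∫ |v'|`, so `v` is bounded. -/

theorem norm_le_norm_add_integral_norm_of_hasDerivWithinAt_Ici {E : Type*}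
    [NormedAddCommGroup E] [NormedSpace ℝ E] [CompleteSpace E] {v v' : ℝ → E} {a x : ℝ}
    (hv : ∀ t ∈ Ici a, HasDerivWithinAt v (v' t) (Ici a) t) (hv' : IntegrableOn v' (Ici a))
    (hx : a ≤ x) :
    ‖v x‖ ≤ ‖v a‖ + ∫ t in Ici a, ‖v' t‖ := by
  have hIoc : Ioc a x ⊆ Ici a := Ioc_subset_Icc_self.trans Icc_subset_Ici_self
  have hftc : ∫ t in a..x, v' t = v x - v a := by
    refine intervalIntegral.integral_eq_sub_of_hasDeriv_right_of_le hx
      (fun t ht => (hv t ht.1).continuousWithinAt.mono Icc_subset_Ici_self) (fun t ht => ?_)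
      ((intervalIntegrable_iff_integrableOn_Ioc_of_le hx).2 (hv'.mono_set hIoc))
    exact ((hv t ht.1.le).hasDerivAt (Ici_mem_nhds ht.1)).hasDerivWithinAt
  calc ‖v x‖ = ‖v a + ∫ t in a..x, v' t‖ := by rw [hftc, add_sub_cancel]
    _ ≤ ‖v a‖ + ∫ t in Ioc a x, ‖v' t‖ := by
      grw [norm_add_le, intervalIntegral.norm_integral_le_integral_norm hx,
        intervalIntegral.integral_of_le hx]
    _ ≤ ‖v a‖ + ∫ t in Ici a, ‖v' t‖ := by
      grw [setIntegral_mono_set hv'.norm (ae_of_all _ fun t => norm_nonneg _) hIoc.eventuallyLE]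

theorem hasDerivWithinAt_one_add_pow_mul {u : ℝ → ℝ} {u' x : ℝ} {s : Set ℝ} (n : ℕ)
    (hu : HasDerivWithinAt u u' s x) :
    HasDerivWithinAt (fun t => (1 + t) ^ n * u t)
      (n * (1 + x) ^ (n - 1) * u x + (1 + x) ^ n * u') s x := by
  have hpow : HasDerivAt (fun t : ℝ => (1 + t) ^ n) (n * (1 + x) ^ (n - 1)) x := by
    simpa using ((hasDerivAt_id x).const_add 1).fun_pow n
  exact hpow.hasDerivWithinAt.mul hu

theorem abs_deriv_one_add_pow_mul_le {n : ℕ} {x : ℝ} (hx : 0 ≤ x) (y y' : ℝ) :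
    |n * (1 + x) ^ (n - 1) * y + (1 + x) ^ n * y'| ≤
      n * ((1 + x) ^ n * |y|) + (1 + x) ^ n * |y'| := by
  have hpow : (1 + x) ^ (n - 1) ≤ (1 + x) ^ n :=
    pow_le_pow_right₀ (by linarith) (Nat.sub_le n 1)
  calc |n * (1 + x) ^ (n - 1) * y + (1 + x) ^ n * y'|
      ≤ |n * (1 + x) ^ (n - 1) * y| + |(1 + x) ^ n * y'| := abs_add_le _ _
    _ = n * (1 + x) ^ (n - 1) * |y| + (1 + x) ^ n * |y'| := by
      simp only [abs_mul, abs_pow, Nat.abs_cast, abs_of_nonneg (by linarith : (0 : ℝ) ≤ 1 + x)]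
    _ ≤ n * ((1 + x) ^ n * |y|) + (1 + x) ^ n * |y'| := by
      rw [← mul_assoc]
      gcongr

theorem stmt0_general (u u' : ℝ → ℝ) (n : ℕ)
    (hderiv : ∀ x ∈ Ici (0:ℝ), HasDerivWithinAt u (u' x) (Ici 0) x)
    (hcont : ContinuousOn u' (Ici 0))
    (h0 : IntegrableOn (fun x => (1 + x) ^ n * |u x|) (Ici 0))
    (h1 : IntegrableOn (fun x => (1 + x) ^ n * |u' x|) (Ici 0)) :
    ∃ C : ℝ, ∀ x : ℝ, 0 ≤ x → |u x| ≤ C / (1 + x) ^ n := by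
  set g : ℝ → ℝ := fun x => n * (1 + x) ^ (n - 1) * u x + (1 + x) ^ n * u' x
  have hu : ContinuousOn u (Ici 0) := fun x hx => (hderiv x hx).continuousWithinAt
  have hg : IntegrableOn g (Ici 0) := by
    refine ((h0.const_mul n).add h1).mono' ?_ ?_
    · exact ContinuousOn.aestronglyMeasurable (by fun_prop) measurableSet_Ici
    · filter_upwards [ae_restrict_mem measurableSet_Ici] with x hx
      exact abs_deriv_one_add_pow_mul_le hx _ _
  refine ⟨|u 0| + ∫ t in Ici 0, |g t|, fun x hx => ?_⟩
  have hpos : 0 < (1 + x) ^ n := by positivity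
  rw [le_div_iff₀ hpos, ← abs_of_pos hpos, ← abs_mul, mul_comm]
  simpa using norm_le_norm_add_integral_norm_of_hasDerivWithinAt_Ici
    (fun t ht => hasDerivWithinAt_one_add_pow_mul n (hderiv t ht)) hg hx

theorem stmt0 (u u' : ℝ → ℝ) (n : ℕ) (hn : 1 ≤ n)
    (hderiv : ∀ x ∈ Ici (0:ℝ), HasDerivWithinAt u (u' x) (Ici 0) x)
    (hcont : ContinuousOn u' (Ici 0))
    (h0 : IntegrableOn (fun x => (1 + x) ^ n * |u x|) (Ici 0))
    (h1 : IntegrableOn (fun x => (1 + x) ^ n * |u' x|) (Ici 0)) :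
    ∃ C : ℝ, ∀ x : ℝ, 0 ≤ x → |u x| ≤ C / (1 + x) ^ n :=
  stmt0_general u u' n hderiv hcont h0 h1
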